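/- arXiv:2303.09207 — 5 statements merged into one kernel-verified Lean document; each statement's English description precedes it below -/
import Mathlib

section
/- Super semigroup law for the exponentials generated by a supersymmetry. Let A be a complete normed algebra over ℂ and let q, θ, η ∈ A satisfy the Grassmann relations θ² = 0, η² = 0, θη = −ηθ, θq = −qθ, ηq = −qη. Then for all real numbers t and s one has exp(−t·q² + θ*q) * exp(−s·q² + η*q) = exp(−(t+s)·q² − θ*η*q² + (θ+η)*q). In other words, the assignment (t,θ) ↦ e^{−t q² + θ q} carries the super semigroup multiplication (t,θ)·(s,η) = (t+s+θη, θ+η) of ℝ^{1|1}_{≥0} to multiplication in A. -/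
/-!
Put `a = θq`, `b = ηq` and `c = q²`. The Grassmann relations make `a` and `b` commute with `c`,
square to zero and anticommute, with `ab = -θηq²`. Hence `exp(r•c + a) = exp(r•c)(1 + a)`, the
even factors `exp(r•c)` may be collected, and `(1 + a)(1 + b) = 1 + (a + b + ab)`, where
`a + b + ab` again squares to zero and commutes with `c`, so that `1 + (a + b + ab)` is itself the
exponential of `a + b + ab`.
-/

open NormedSpace

section Anticommuting

variable {R : Type*} [Ring R] {a b c : R}

theorem commute_sq_of_mul_eq_neg_mul (h : a * b = -(b * a)) : Commute a (b ^ 2) := by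
  rw [Commute, SemiconjBy, sq, ← mul_assoc, h, neg_mul, mul_assoc, h, mul_neg, neg_neg,
    mul_assoc]

theorem mul_sq_eq_zero_of_mul_eq_neg_mul (ha : a ^ 2 = 0) (h : a * b = -(b * a)) :
    (a * b) ^ 2 = 0 := by
  have hba : b * a = -(a * b) := by rw [h, neg_neg]
  calc (a * b) ^ 2 = a * (b * a) * b := by noncomm_ring
    _ = -(a ^ 2 * b ^ 2) := by rw [hba]; noncomm_ring
    _ = 0 := by rw [ha, zero_mul, neg_zero]

theorem mul_mul_mul_eq_neg_of_mul_eq_neg_mul (h : b * c = -(c * b)) :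
    a * c * (b * c) = -(a * b * c ^ 2) := by
  have hcb : c * b = -(b * c) := by rw [h, neg_neg]
  calc a * c * (b * c) = a * (c * b) * c := by noncomm_ring
    _ = -(a * b * c ^ 2) := by rw [hcb]; noncomm_ring

theorem sq_add_add_mul_eq_zero (ha : a ^ 2 = 0) (hb : b ^ 2 = 0) (h : a * b = -(b * a)) :
    (a + b + a * b) ^ 2 = 0 := by
  have ha' : a * a = 0 := by rw [← sq, ha]
  have hb' : b * b = 0 := by rw [← sq, hb]
  have hba : b * a = -(a * b) := by rw [h, neg_neg]
  have haab : a * (a * b) = 0 := by rw [← mul_assoc, ha', zero_mul]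
  have habb : a * b * b = 0 := by rw [mul_assoc, hb', mul_zero]
  have hbab : b * (a * b) = 0 := by rw [← mul_assoc, hba, neg_mul, habb, neg_zero]
  have haba : a * b * a = 0 := by rw [mul_assoc, hba, mul_neg, haab, neg_zero]
  calc (a + b + a * b) ^ 2
      = a * a + b * b + (a * b + b * a) + (a * (a * b) + a * b * b)
          + (b * (a * b) + a * b * a) + a * b * a * b := by noncomm_ring
    _ = 0 := by rw [ha', hb', hba, haab, habb, hbab, haba, zero_mul]; abel

end Anticommuting

theorem exp_eq_one_add_of_sq_eq_zero {A : Type*} [Ring A] [Algebra ℚ A] [TopologicalSpace A]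
    [IsTopologicalRing A] {x : A} (hx : x ^ 2 = 0) : exp x = 1 + x := by
  have hpow : ∀ n ∉ Finset.range 2, ((Nat.factorial n : ℚ)⁻¹) • x ^ n = 0 := fun n hn => by
    rw [← Nat.sub_add_cancel (not_lt.mp (Finset.mem_range.not.mp hn)), pow_add, hx, mul_zero,
      smul_zero]
  rw [exp_eq_tsum_rat]
  beta_reduce
  rw [tsum_eq_sum hpow]
  simp [Finset.sum_range_succ]

section SuperSemigroup

variable {𝕜 A : Type*} [CommSemiring 𝕜] [NormedRing A] [NormedAlgebra ℚ A] [CompleteSpace A]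
  [Algebra 𝕜 A]

theorem exp_add_eq_exp_mul_one_add {x y : A} (hxy : Commute x y) (hy : y ^ 2 = 0) :
    exp (x + y) = exp x * (1 + y) := by
  rw [exp_add_of_commute hxy, exp_eq_one_add_of_sq_eq_zero hy]

theorem exp_smul_add_mul_exp_smul_add {a b c : A} (hac : Commute a c) (hbc : Commute b c)
    (ha : a ^ 2 = 0) (hb : b ^ 2 = 0) (hab : a * b = -(b * a)) (r r' : 𝕜) :
    exp (r • c + a) * exp (r' • c + b) = exp ((r + r') • c + (a + b + a * b)) := by
  have hcommute : Commute (1 + a) (exp (r' • c)) :=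
    (Commute.one_left _).add_left (hac.smul_right r').exp_right
  have hexp : exp (r • c) * exp (r' • c) = exp ((r + r') • c) := by
    rw [← exp_add_of_commute (((Commute.refl c).smul_left r).smul_right r'), add_smul]
  have hvc : Commute (a + b + a * b) c := (hac.add_left hbc).add_left (hac.mul_left hbc)
  calc exp (r • c + a) * exp (r' • c + b)
      = exp (r • c) * ((1 + a) * exp (r' • c)) * (1 + b) := by
        rw [exp_add_eq_exp_mul_one_add (hac.symm.smul_left r) ha,
          exp_add_eq_exp_mul_one_add (hbc.symm.smul_left r') hb]
        noncomm_ring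
    _ = exp ((r + r') • c) * (1 + (a + b + a * b)) := by
        rw [hcommute.eq, ← hexp]; noncomm_ring
    _ = exp ((r + r') • c + (a + b + a * b)) := by
        rw [exp_add_eq_exp_mul_one_add (hvc.symm.smul_left _) (sq_add_add_mul_eq_zero ha hb hab)]

end SuperSemigroup

/-- **Super semigroup law for the exponentials generated by a supersymmetry.**
Let `A` be a complete normed algebra over `ℂ` and let `q, θ, η ∈ A` satisfy the Grassmann
relations `θ² = 0`, `η² = 0`, `θη = −ηθ`, `θq = −qθ`, `ηq = −qη`. Then for all real `t, s`,
`exp(−t·q² + θq) * exp(−s·q² + ηq) = exp(−(t+s)·q² − θη·q² + (θ+η)·q)`. -/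
theorem super_semigroup_exp
    {A : Type*} [NormedRing A] [NormedAlgebra ℂ A] [CompleteSpace A]
    (q θ η : A)
    (hθ2 : θ ^ 2 = 0) (hη2 : η ^ 2 = 0)
    (hθη : θ * η = -(η * θ))
    (hθq : θ * q = -(q * θ)) (hηq : η * q = -(q * η))
    (t s : ℝ) :
    NormedSpace.exp ((-(t : ℂ)) • q ^ 2 + θ * q) *
        NormedSpace.exp ((-(s : ℂ)) • q ^ 2 + η * q)
      = NormedSpace.exp ((-((t : ℂ) + (s : ℂ))) • q ^ 2 - θ * η * q ^ 2 + (θ + η) * q) := by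
  let +nondep : NormedAlgebra ℚ A := .restrictScalars ℚ ℂ A
  have hθc : Commute (θ * q) (q ^ 2) :=
    (commute_sq_of_mul_eq_neg_mul hθq).mul_left (Commute.self_pow q 2)
  have hηc : Commute (η * q) (q ^ 2) :=
    (commute_sq_of_mul_eq_neg_mul hηq).mul_left (Commute.self_pow q 2)
  have hθηq : θ * q * (η * q) = -(θ * η * q ^ 2) := mul_mul_mul_eq_neg_of_mul_eq_neg_mul hηq
  have hanti : θ * q * (η * q) = -(η * q * (θ * q)) := by
    rw [hθηq, mul_mul_mul_eq_neg_of_mul_eq_neg_mul hθq, hθη, neg_mul]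
  rw [exp_smul_add_mul_exp_smul_add hθc hηc (mul_sq_eq_zero_of_mul_eq_neg_mul hθ2 hθq)
    (mul_sq_eq_zero_of_mul_eq_neg_mul hη2 hηq) hanti, hθηq, neg_add, add_mul]
  abel_nf
end

section
/- McKean–Singer formula for the partition function of supersymmetric quantum mechanics. Let V be a finite-dimensional complex inner product space with ℤ/2-grading given by a self-adjoint linear involution ε, with even part V⁺ = ker(ε − id) and odd part V⁻ = ker(ε + id), and let Q : V → V be an odd (Q∘ε = −ε∘Q) self-adjoint operator. Then for every real number t, sTr(exp(−t·Q²)) = dim(ker Q ∩ V⁺) − dim(ker Q ∩ V⁻). In particular the partition function Z(t) = sTr(e^{−tQ²}) is independent of t and equals the index of Q. -/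
/-!
Since `Q` is self-adjoint, `V = ker Q ⊕ range Q`, and both summands are preserved by `ε` and by
`F = exp (-t Q²)`, which commutes with `Q`. On `range Q` the operator `Q` is invertible and
anticommutes with `ε F`, so conjugation by it turns `ε F` into `-ε F` and the trace there vanishes.
On `ker Q` the operator `F` is the identity, so what remains is the trace of the involution `ε` on
`ker Q`: the dimension of its `+1`-eigenspace minus that of its `-1`-eigenspace.
-/

open Module
open LinearMap

theorem ContinuousLinearMap.exp_apply_of_apply_eq_zero {𝕜 E : Type*} [RCLike 𝕜]
    [NormedAddCommGroup E] [NormedSpace 𝕜 E] [CompleteSpace E] {A : E →L[𝕜] E} {x : E}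
    (hx : A x = 0) : NormedSpace.exp A x = x := by
  have hpow : ∀ n ≠ 0, (⇑A)^[n] x = 0 := fun n hn => by
    obtain ⟨k, rfl⟩ := Nat.exists_eq_succ_of_ne_zero hn
    rw [Function.iterate_succ_apply, hx, iterate_map_zero]
  have happly := (ContinuousLinearMap.apply 𝕜 E x).map_tsum
    (NormedSpace.expSeries_summable' (𝕂 := 𝕜) A)
  rw [NormedSpace.exp_eq_tsum 𝕜]
  exact happly.trans ((tsum_eq_single 0 fun n hn => by simp [hpow n hn]).trans (by simp))

theorem LinearMap.trace_eq_zero_of_anticommute {R M : Type*} [CommRing R] [IsAddTorsionFree R]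
    [AddCommGroup M] [Module R M] {f : Module.End R M} (g : M ≃ₗ[R] M)
    (h : ∀ x, g (f x) = -f (g x)) : trace R M f = 0 := by
  have hconj : g.conj f = -f := by
    ext x
    simpa using h (g.symm x)
  have htrace := trace_conj' f g
  rwa [hconj, map_neg, neg_eq_self] at htrace

theorem Submodule.finrank_comap_subtype {R M : Type*} [Ring R] [AddCommGroup M] [Module R M]
    (p q : Submodule R M) : finrank R (q.comap p.subtype) = finrank R ↥(p ⊓ q) := by
  rw [← map_comap_subtype]
  exact (equivMapOfInjective _ p.injective_subtype _).finrank_eq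

section

variable {K M : Type*} [Field K] [AddCommGroup M] [Module K M] [FiniteDimensional K M]

theorem LinearMap.trace_eq_add_trace_restrict_of_isCompl {p q : Submodule K M} (hpq : IsCompl p q)
    {f : Module.End K M} (hp : ∀ x ∈ p, f x ∈ p) (hq : ∀ x ∈ q, f x ∈ q) :
    trace K M f = trace K p (f.restrict hp) + trace K q (f.restrict hq) := by
  let N : Bool → Submodule K M := fun b => bif b then p else q
  have hN : DirectSum.IsInternal N :=
    (DirectSum.isInternal_submodule_iff_isCompl N (i := true) (j := false) (by decide)
      (by ext b; cases b <;> simp)).mpr hpq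
  rw [trace_eq_sum_trace_restrict hN (f := f) (fun b => by cases b; exacts [hq, hp]),
    Fintype.sum_bool]
  rfl

theorem LinearMap.trace_eq_trace_restrict_ker_of_anticommute [CharZero K] {Q T : Module.End K M}
    (hQ : IsCompl (ker Q) (range Q)) (hQT : Q * T = -(T * Q)) (hT : ∀ x ∈ ker Q, T x ∈ ker Q) :
    trace K M T = trace K (ker Q) (T.restrict hT) := by
  have hT_range : ∀ x ∈ range Q, T x ∈ range Q := by
    rintro _ ⟨y, rfl⟩
    exact ⟨-T y, by rw [map_neg, neg_eq_iff_eq_neg]; exact congr($hQT y)⟩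
  let q := Q.restrict fun x (_ : x ∈ range Q) => mem_range_self Q x
  have hq : Function.Injective q := by
    rw [← ker_eq_bot, ker_restrict, ← Submodule.disjoint_iff_comap_eq_bot]
    exact hQ.disjoint.symm
  rw [trace_eq_add_trace_restrict_of_isCompl hQ hT hT_range,
    trace_eq_zero_of_anticommute (LinearEquiv.ofBijective q ⟨hq, injective_iff_surjective.mp hq⟩),
    add_zero]
  intro x
  exact Subtype.ext congr($hQT x)

theorem LinearMap.trace_eq_finrank_sub_finrank_of_mul_self_eq_one [CharZero K]
    {f : Module.End K M} (hf : f * f = 1) :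
    trace K M f = finrank K (ker (f - 1)) - finrank K (ker (f + 1)) := by
  have hff : ∀ x, f (f x) = x := fun x => congr($hf x)
  have hcompl : IsCompl (ker (f - 1)) (ker (f + 1)) := by
    refine ⟨Submodule.disjoint_def.mpr fun x h₁ h₂ => ?_,
      Submodule.codisjoint_iff_exists_add_eq.mpr fun x =>
        ⟨(2 : K)⁻¹ • (x + f x), (2 : K)⁻¹ • (x - f x), ?_, ?_, ?_⟩⟩
    · simp only [mem_ker, sub_apply, add_apply, Module.End.one_apply, sub_eq_zero] at h₁ h₂
      rw [h₁, ← two_smul K] at h₂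
      exact (smul_eq_zero.mp h₂).resolve_left two_ne_zero
    · simp [hff, add_comm]
    · simp [hff]
    · module
  have h₁ : ∀ x ∈ ker (f - 1), f x ∈ ker (f - 1) := fun x hx => by
    simp only [mem_ker, sub_apply, Module.End.one_apply, sub_eq_zero] at hx ⊢
    rw [hx, hx]
  have h₂ : ∀ x ∈ ker (f + 1), f x ∈ ker (f + 1) := fun x hx => by
    simp only [mem_ker, add_apply, Module.End.one_apply, add_eq_zero_iff_eq_neg] at hx ⊢
    rw [hff, hx, neg_neg]
  have hr₁ : f.restrict h₁ = 1 := by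
    ext ⟨x, hx⟩
    simpa [sub_eq_zero] using hx
  have hr₂ : f.restrict h₂ = -1 := by
    ext ⟨x, hx⟩
    simpa [add_eq_zero_iff_eq_neg] using hx
  rw [trace_eq_add_trace_restrict_of_isCompl hcompl h₁ h₂, hr₁, hr₂, map_neg, trace_one, trace_one,
    ← sub_eq_add_neg]

theorem LinearMap.trace_restrict_eq_finrank_sub_finrank_of_mul_self_eq_one [CharZero K]
    {f : Module.End K M} (hf : f * f = 1) {p : Submodule K M} (hp : ∀ x ∈ p, f x ∈ p) :
    trace K p (f.restrict hp) = finrank K ↥(p ⊓ ker (f - 1)) - finrank K ↥(p ⊓ ker (f + 1)) := by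
  have hsq : f.restrict hp * f.restrict hp = 1 := by
    ext x
    exact congr($hf x)
  have hker₁ : ker (f.restrict hp - 1) = (ker (f - 1)).comap p.subtype := by
    ext x
    simp [sub_eq_zero, Subtype.ext_iff]
  have hker₂ : ker (f.restrict hp + 1) = (ker (f + 1)).comap p.subtype := by
    ext x
    simp [add_eq_zero_iff_eq_neg, Subtype.ext_iff]
  rw [trace_eq_finrank_sub_finrank_of_mul_self_eq_one hsq, hker₁, hker₂,
    Submodule.finrank_comap_subtype, Submodule.finrank_comap_subtype]

end

theorem LinearMap.IsSymmetric.isCompl_ker_range {𝕜 E : Type*} [RCLike 𝕜] [NormedAddCommGroup E]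
    [InnerProductSpace 𝕜 E] [FiniteDimensional 𝕜 E] {T : E →ₗ[𝕜] E} (hT : T.IsSymmetric) :
    IsCompl (ker T) (range T) := by
  rw [← hT.orthogonal_range]
  exact (range T).isCompl_orthogonal.symm

theorem mckean_singer_general
    {V : Type*} [NormedAddCommGroup V] [InnerProductSpace ℂ V] [FiniteDimensional ℂ V]
    (ε Q : V →L[ℂ] V)
    (hε2 : ε * ε = 1)
    (hQ_sa : IsSelfAdjoint Q) (hodd : Q * ε = -(ε * Q))
    (t : ℝ) :
    LinearMap.trace ℂ V ((ε * NormedSpace.exp ((-(t : ℂ)) • Q ^ 2)).toLinearMap)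
      = (((finrank ℂ ↥(LinearMap.ker (Q : V →ₗ[ℂ] V) ⊓ LinearMap.ker ((ε - 1 : V →L[ℂ] V) : V →ₗ[ℂ] V)) : ℤ)
          - (finrank ℂ ↥(LinearMap.ker (Q : V →ₗ[ℂ] V) ⊓ LinearMap.ker ((ε + 1 : V →L[ℂ] V) : V →ₗ[ℂ] V)) : ℤ) : ℤ) : ℂ) := by
  set F := NormedSpace.exp ((-(t : ℂ)) • Q ^ 2)
  have hFQ : Commute F Q := (((Commute.refl Q).pow_left 2).smul_left _).exp_left
  have hF_ker (x : V) (hx : Q x = 0) : F x = x :=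
    ContinuousLinearMap.exp_apply_of_apply_eq_zero (by simp [sq, hx])
  have hε_ker : ∀ x ∈ ker (Q : V →ₗ[ℂ] V), ε x ∈ ker (Q : V →ₗ[ℂ] V) := fun x (hx : Q x = 0) =>
    show Q (ε x) = 0 by simpa [hx] using congr($hodd x)
  have hεF_ker : ∀ x ∈ ker (Q : V →ₗ[ℂ] V), (ε * F) x ∈ ker (Q : V →ₗ[ℂ] V) := fun x hx => by
    simpa [hF_ker x hx] using hε_ker x hx
  have hQεF : Q * (ε * F) = -((ε * F) * Q) := by
    rw [← mul_assoc, hodd, neg_mul, mul_assoc, ← hFQ.eq, mul_assoc]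
  have hrestrict : ((ε * F : V →L[ℂ] V) : V →ₗ[ℂ] V).restrict hεF_ker =
      (ε : V →ₗ[ℂ] V).restrict hε_ker := by
    ext ⟨x, hx⟩
    exact congr_arg ε (hF_ker x hx)
  rw [trace_eq_trace_restrict_ker_of_anticommute hQ_sa.isSymmetric.isCompl_ker_range
      congr(($hQεF : V →ₗ[ℂ] V)) hεF_ker, hrestrict,
    trace_restrict_eq_finrank_sub_finrank_of_mul_self_eq_one congr(($hε2 : V →ₗ[ℂ] V))]
  push_cast
  rfl

/-- **McKean–Singer formula for the partition function of supersymmetric quantum mechanics.**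
Let `V` be a finite-dimensional complex inner product space with `ℤ/2`-grading given by a
self-adjoint linear involution `ε` (even part `V⁺ = ker (ε − 1)`, odd part `V⁻ = ker (ε + 1)`),
and let `Q` be an odd (`Q∘ε = −ε∘Q`) self-adjoint operator. Then for every real `t`,
`sTr (exp (−t·Q²)) = dim (ker Q ∩ V⁺) − dim (ker Q ∩ V⁻)`. -/
theorem mckean_singer
    {V : Type*} [NormedAddCommGroup V] [InnerProductSpace ℂ V] [FiniteDimensional ℂ V]
    (ε Q : V →L[ℂ] V)
    (hε_sa : IsSelfAdjoint ε) (hε2 : ε * ε = 1)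
    (hQ_sa : IsSelfAdjoint Q) (hodd : Q * ε = -(ε * Q))
    (t : ℝ) :
    LinearMap.trace ℂ V ((ε * NormedSpace.exp ((-(t : ℂ)) • Q ^ 2)).toLinearMap)
      = (((finrank ℂ ↥(LinearMap.ker (Q : V →ₗ[ℂ] V) ⊓ LinearMap.ker ((ε - 1 : V →L[ℂ] V) : V →ₗ[ℂ] V)) : ℤ)
          - (finrank ℂ ↥(LinearMap.ker (Q : V →ₗ[ℂ] V) ⊓ LinearMap.ker ((ε + 1 : V →L[ℂ] V) : V →ₗ[ℂ] V)) : ℤ) : ℤ) : ℂ) :=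
  mckean_singer_general ε Q hε2 hQ_sa hodd t
end

section
/- Independence of the Witten index under energy cutoffs. Let V be a finite-dimensional complex inner product space with ℤ/2-grading given by a self-adjoint linear involution ε (even part V⁺ = ker(ε − id), odd part V⁻ = ker(ε + id)), and let Q : V → V be an odd self-adjoint operator. For every real λ > 0, let H^{<λ} := ⨆_{ν < λ} E_ν be the sum of the eigenspaces E_ν of Q² with eigenvalue ν < λ. Then dim(H^{<λ} ∩ V⁺) − dim(H^{<λ} ∩ V⁻) = dim(ker Q ∩ V⁺) − dim(ker Q ∩ V⁻); that is, the super-dimension of the λ-cutoff space is independent of λ and equals the Witten index of Q. -/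
open Module

/-- **Independence of the Witten index under energy cutoffs.**
Let `V` be a finite-dimensional complex inner product space with `ℤ/2`-grading given by a
self-adjoint linear involution `ε` (even part `V⁺ = ker (ε − 1)`, odd part `V⁻ = ker (ε + 1)`),
and let `Q` be an odd self-adjoint operator. For every real `λ > 0`, letting
`H^{<λ} := ⨆_{ν < λ} E_ν` (sum of eigenspaces of `Q²` with eigenvalue `ν < λ`),
`dim (H^{<λ} ∩ V⁺) − dim (H^{<λ} ∩ V⁻) = dim (ker Q ∩ V⁺) − dim (ker Q ∩ V⁻)`. -/
theorem witten_index_cutoff_independence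
    {V : Type*} [NormedAddCommGroup V] [InnerProductSpace ℂ V] [FiniteDimensional ℂ V]
    (ε Q : V →ₗ[ℂ] V)
    (hε_sa : ε.IsSymmetric) (hε2 : ε * ε = 1)
    (hQ_sa : Q.IsSymmetric) (hodd : Q * ε = -(ε * Q))
    (lam : ℝ) (hlam : 0 < lam) :
    (finrank ℂ ↥((⨆ ν : ℝ, ⨆ _ : ν < lam,
          Module.End.eigenspace (Q ^ 2 : Module.End ℂ V) (ν : ℂ)) ⊓ LinearMap.ker (ε - 1)) : ℤ)
        - (finrank ℂ ↥((⨆ ν : ℝ, ⨆ _ : ν < lam,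
          Module.End.eigenspace (Q ^ 2 : Module.End ℂ V) (ν : ℂ)) ⊓ LinearMap.ker (ε + 1)) : ℤ)
      = (finrank ℂ ↥(LinearMap.ker Q ⊓ LinearMap.ker (ε - 1)) : ℤ)
        - (finrank ℂ ↥(LinearMap.ker Q ⊓ LinearMap.ker (ε + 1)) : ℤ) := by
  set H : Submodule ℂ V := ⨆ ν : ℝ, ⨆ _ : ν < lam,
      Module.End.eigenspace (Q ^ 2 : Module.End ℂ V) (ν : ℂ) with hH
  -- `Q` preserves each eigenspace of `Q ^ 2`, hence `H`.
  have hQH : ∀ x ∈ H, Q x ∈ H := by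
    intro x hx
    have : Submodule.map Q H ≤ H := by
      rw [hH, Submodule.map_iSup]
      refine iSup_le fun ν => ?_
      rw [Submodule.map_iSup]
      refine iSup_le fun hν => le_trans ?_ (le_iSup_of_le ν (le_iSup_of_le hν le_rfl))
      rintro y ⟨z, hz, rfl⟩
      rw [SetLike.mem_coe] at hz
      rw [Module.End.mem_eigenspace_iff] at hz ⊢
      have h2 : (Q ^ 2 : Module.End ℂ V) (Q z) = Q ((Q ^ 2 : Module.End ℂ V) z) := by
        simp [pow_two, Module.End.mul_apply]
      rw [h2, hz, map_smul]
    exact this ⟨x, hx, rfl⟩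
  -- parity swapping
  have hodd' : ∀ x : V, Q (ε x) = -(ε (Q x)) := fun x => by
    have := congrArg (fun f : V →ₗ[ℂ] V => f x) hodd
    simpa [Module.End.mul_apply] using this
  have hmemp : ∀ x : V, x ∈ LinearMap.ker (ε - 1) ↔ ε x = x := by
    intro x; simp [LinearMap.mem_ker, sub_eq_zero]
  have hmemm : ∀ x : V, x ∈ LinearMap.ker (ε + 1) ↔ ε x = -x := by
    intro x
    constructor
    · intro h
      have h0 : ε x + x = 0 := by simpa using h
      exact eq_neg_of_add_eq_zero_left h0
    · intro h
      simp [LinearMap.mem_ker, h]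
  -- `ker Q² = ker Q`
  have hkerQsq : ∀ x : V, Q (Q x) = 0 → Q x = 0 := by
    intro x hx
    have h1 := hQ_sa (Q x) x
    rw [hx, inner_zero_left] at h1
    exact inner_self_eq_zero.mp h1.symm
  -- `ker Q ≤ H`
  have hkerH : LinearMap.ker Q ≤ H := by
    intro x hx
    rw [LinearMap.mem_ker] at hx
    have hx0 : x ∈ Module.End.eigenspace (Q ^ 2 : Module.End ℂ V) ((0 : ℝ) : ℂ) := by
      rw [Module.End.mem_eigenspace_iff]
      simp [pow_two, Module.End.mul_apply, hx]
    exact Submodule.mem_iSup_of_mem (0 : ℝ) (Submodule.mem_iSup_of_mem hlam hx0)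
  set A : Submodule ℂ V := H ⊓ LinearMap.ker (ε - 1) with hA
  set B : Submodule ℂ V := H ⊓ LinearMap.ker (ε + 1) with hB
  have hABmem : ∀ x ∈ A, Q x ∈ B := by
    rintro x ⟨hxH, hxp⟩
    refine ⟨hQH x hxH, (hmemm _).mpr ?_⟩
    have := hodd' x
    rw [(hmemp x).mp hxp] at this
    exact (neg_eq_iff_eq_neg.mp this.symm)
  have hBAmem : ∀ x ∈ B, Q x ∈ A := by
    rintro x ⟨hxH, hxm⟩
    refine ⟨hQH x hxH, (hmemp _).mpr ?_⟩
    have := hodd' x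
    rw [(hmemm x).mp hxm] at this
    simp only [map_neg] at this
    have := neg_injective this
    exact this.symm
  set f : A →ₗ[ℂ] B := Q.restrict hABmem with hf
  set g : B →ₗ[ℂ] A := Q.restrict hBAmem with hg
  -- kernels of the compositions agree with kernels of the factors
  have hker_gf : LinearMap.ker (g ∘ₗ f) = LinearMap.ker f := by
    ext ⟨x, hx⟩
    simp only [LinearMap.mem_ker, LinearMap.comp_apply, hf, hg, Subtype.ext_iff,
      LinearMap.restrict_apply, ZeroMemClass.coe_zero]
    exact ⟨fun h => hkerQsq x h, fun h => by rw [h, map_zero]⟩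
  have hker_fg : LinearMap.ker (f ∘ₗ g) = LinearMap.ker g := by
    ext ⟨x, hx⟩
    simp only [LinearMap.mem_ker, LinearMap.comp_apply, hf, hg, Subtype.ext_iff,
      LinearMap.restrict_apply, ZeroMemClass.coe_zero]
    exact ⟨fun h => hkerQsq x h, fun h => by rw [h, map_zero]⟩
  -- rank comparison
  have hrn1 := LinearMap.finrank_range_add_finrank_ker f
  have hrn2 := LinearMap.finrank_range_add_finrank_ker g
  have hrn3 := LinearMap.finrank_range_add_finrank_ker (g ∘ₗ f)
  have hrn4 := LinearMap.finrank_range_add_finrank_ker (f ∘ₗ g)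
  rw [hker_gf] at hrn3
  rw [hker_fg] at hrn4
  have hle1 : finrank ℂ (LinearMap.range (g ∘ₗ f)) ≤ finrank ℂ (LinearMap.range g) :=
    Submodule.finrank_mono (LinearMap.range_comp_le_range f g)
  have hle2 : finrank ℂ (LinearMap.range (f ∘ₗ g)) ≤ finrank ℂ (LinearMap.range f) :=
    Submodule.finrank_mono (LinearMap.range_comp_le_range g f)
  have hrank : finrank ℂ (LinearMap.range f) = finrank ℂ (LinearMap.range g) := by omega
  -- identify the kernels of the restrictions
  have hkf : finrank ℂ (LinearMap.ker f) =
      finrank ℂ (LinearMap.ker Q ⊓ LinearMap.ker (ε - 1) : Submodule ℂ V) := by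
    rw [hf, LinearMap.ker_restrict hABmem]
    rw [← Submodule.finrank_map_subtype_eq A, Submodule.map_comap_subtype]
    have hs : A ⊓ LinearMap.ker Q = LinearMap.ker Q ⊓ LinearMap.ker (ε - 1) := by
      rw [hA, inf_right_comm, inf_of_le_right hkerH, inf_comm]
    rw [hs]
  have hkg : finrank ℂ (LinearMap.ker g) =
      finrank ℂ (LinearMap.ker Q ⊓ LinearMap.ker (ε + 1) : Submodule ℂ V) := by
    rw [hg, LinearMap.ker_restrict hBAmem]
    rw [← Submodule.finrank_map_subtype_eq B, Submodule.map_comap_subtype]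
    have hs : B ⊓ LinearMap.ker Q = LinearMap.ker Q ⊓ LinearMap.ker (ε + 1) := by
      rw [hB, inf_right_comm, inf_of_le_right hkerH, inf_comm]
    rw [hs]
  rw [← hkf, ← hkg]
  omega
end

section
/- Invertibility of the deformed degree-zero superconnection term. Let V be a finite-dimensional complex inner product space, A : V → V a self-adjoint linear operator, and W ⊆ V a subspace with A(W) ⊆ W and ker A ⊆ W; let pᵂ : V → W denote the orthogonal projection and iᵂ : W → V the inclusion. Then for every real s ≠ 0 the linear endomorphism of V × W given by (x, w) ↦ (A x + s·iᵂ(w), s·pᵂ(x)) is bijective. (This is the invertibility, for s > 0, of the block operator 𝔸_λ(s)^{[0]} = [[𝔸^{[0]}, s·i_λ],[s·p^λ, 0]] appearing in the construction of the index bundle, where W is the sum of eigenspaces of 𝔸^{[0]} with eigenvalue below λ.) -/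
/-!
In finite dimension it suffices to show injectivity. If `(x, w)` is in the kernel, then `x ⊥ W`
and `A x = -c w ∈ W`; since `A` is symmetric and `W` is `A`-invariant, `Wᗮ` is `A`-invariant too,
so `A x ∈ W ∩ Wᗮ = 0`. Hence `w = 0`, and `x ∈ ker A ⊆ W` together with `x ⊥ W` gives `x = 0`.
-/

open Submodule

namespace LinearMap.IsSymmetric

variable {𝕜 E : Type*} [RCLike 𝕜] [NormedAddCommGroup E] [InnerProductSpace 𝕜 E]

theorem apply_mem_orthogonal {A : E →ₗ[𝕜] E} (hA : A.IsSymmetric) {W : Submodule 𝕜 E}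
    (hAW : ∀ x ∈ W, A x ∈ W) {x : E} (hx : x ∈ Wᗮ) : A x ∈ Wᗮ := by
  intro y hy
  rw [← hA y x]
  exact hx (A y) (hAW y hy)

end LinearMap.IsSymmetric

section DeformedOperator

variable {𝕜 E : Type*} [RCLike 𝕜] [NormedAddCommGroup E] [InnerProductSpace 𝕜 E]
  (A : E →ₗ[𝕜] E) (W : Submodule 𝕜 E) [W.HasOrthogonalProjection] (c : 𝕜)

noncomputable def deformedOperator : E × W →ₗ[𝕜] E × W :=
  (A ∘ₗ LinearMap.fst 𝕜 E W + c • W.subtype ∘ₗ LinearMap.snd 𝕜 E W).prod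
    (c • W.orthogonalProjectionOnto.toLinearMap ∘ₗ LinearMap.fst 𝕜 E W)

@[simp]
theorem deformedOperator_apply (p : E × W) :
    deformedOperator A W c p = (A p.1 + c • (p.2 : E), c • W.orthogonalProjectionOnto p.1) :=
  rfl

variable {A W c}

theorem ker_deformedOperator_eq_bot (hA : A.IsSymmetric) (hAW : ∀ x ∈ W, A x ∈ W)
    (hker : LinearMap.ker A ≤ W) (hc : c ≠ 0) : LinearMap.ker (deformedOperator A W c) = ⊥ := by
  refine LinearMap.ker_eq_bot'.mpr fun ⟨x, w⟩ h => ?_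
  simp only [deformedOperator_apply, Prod.mk_eq_zero, smul_eq_zero, hc, false_or] at h
  obtain ⟨hAx_add, hpx⟩ := h
  have hx_perp : x ∈ Wᗮ := orthogonalProjectionOnto_eq_zero_iff.mp hpx
  have hAx_mem : A x ∈ W := by
    rw [eq_neg_of_add_eq_zero_left hAx_add]
    exact W.neg_mem (W.smul_mem c w.2)
  have hW : ∀ v ∈ W, v ∈ Wᗮ → v = 0 := disjoint_def.mp W.orthogonal_disjoint
  have hAx : A x = 0 := hW _ hAx_mem (hA.apply_mem_orthogonal hAW hx_perp)
  have hw : w = 0 := by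
    rw [hAx, zero_add, smul_eq_zero] at hAx_add
    exact Subtype.ext (hAx_add.resolve_left hc)
  have hx : x = 0 := hW x (hker hAx) hx_perp
  simp [hx, hw]

theorem deformedOperator_bijective [FiniteDimensional 𝕜 E] (hA : A.IsSymmetric)
    (hAW : ∀ x ∈ W, A x ∈ W) (hker : LinearMap.ker A ≤ W) (hc : c ≠ 0) :
    Function.Bijective (deformedOperator A W c) := by
  have hinj : Function.Injective (deformedOperator A W c) :=
    LinearMap.ker_eq_bot.mp (ker_deformedOperator_eq_bot hA hAW hker hc)
  exact ⟨hinj, LinearMap.injective_iff_surjective.mp hinj⟩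

end DeformedOperator

/-- **Invertibility of the deformed degree-zero superconnection term.**
Let `V` be a finite-dimensional complex inner product space, `A : V → V` a self-adjoint
linear operator, and `W ⊆ V` an `A`-invariant subspace containing `ker A`; let `pᵂ` denote the
orthogonal projection onto `W` and `iᵂ` the inclusion. Then for every real `s ≠ 0` the linear
endomorphism of `V × W` given by `(x, w) ↦ (A x + s·iᵂ(w), s·pᵂ(x))` is bijective. -/
theorem deformed_degree_zero_invertible
    {V : Type*} [NormedAddCommGroup V] [InnerProductSpace ℂ V] [FiniteDimensional ℂ V]
    (A : V →ₗ[ℂ] V) (hA : A.IsSymmetric)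
    (W : Submodule ℂ V) (hAW : ∀ x ∈ W, A x ∈ W) (hker : LinearMap.ker A ≤ W)
    (s : ℝ) (hs : s ≠ 0) :
    Function.Bijective (fun p : V × W =>
      ((A p.1 + (s : ℂ) • (p.2 : V), (s : ℂ) • W.orthogonalProjectionOnto p.1) : V × W)) :=
  deformedOperator_bijective hA hAW hker (Complex.ofReal_ne_zero.mpr hs)
end

section
/- Renormalization-group invariance of the supersymmetric partition function. Let V be a finite-dimensional complex inner product space with ℤ/2-grading given by a self-adjoint linear involution ε (even part V⁺ = ker(ε − id), odd part V⁻ = ker(ε + id)), and let Q : V → V be an odd self-adjoint operator. Then for every real t and every μ > 0, sTr(exp(−μ²t·Q²)) = sTr(exp(−t·Q²)); that is, the partition function Z(t) = sTr(e^{−tQ²}) is invariant under the renormalization group flow t ↦ μ²t. -/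
/-!
Because `Q` anticommutes with `ε`, cyclicity of the trace gives `sTr (Q ^ (n + 1)) = -sTr (Q ^ (n + 1))`,
so every positive power of `Q` has vanishing supertrace. Expanding `exp (c • Q ^ 2)` as a power series,
only the constant term survives: `sTr (exp (c • Q ^ 2)) = sTr 1` for every `c`, in particular it does
not depend on the time parameter at all.
-/

open NormedSpace

theorem LinearMap.trace_mul_pow_succ_eq_zero_of_mul_eq_neg
    {R M : Type*} [CommRing R] [NoZeroDivisors R] [CharZero R] [AddCommGroup M] [Module R M]
    [Module.Free R M] [Module.Finite R M] {a q : M →ₗ[R] M} (hqa : q * a = -(a * q)) (n : ℕ) :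
    trace R M (a * q ^ (n + 1)) = 0 := by
  have h : trace R M (a * q ^ (n + 1)) = -trace R M (a * q ^ (n + 1)) :=
    calc trace R M (a * q ^ (n + 1))
        = trace R M (q * (a * q ^ n)) := by rw [pow_succ, ← mul_assoc, trace_mul_comm]
      _ = -trace R M (a * q ^ (n + 1)) := by
        rw [← mul_assoc, hqa, neg_mul, mul_assoc, ← pow_succ', map_neg]
  exact add_self_eq_zero.mp (by linear_combination h)

theorem ContinuousLinearMap.map_exp_eq_map_one_of_map_pow_succ_eq_zero
    {𝕂 A E : Type*} [RCLike 𝕂] [NormedRing A] [NormedAlgebra 𝕂 A] [CompleteSpace A]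
    [AddCommGroup E] [Module 𝕂 E] [TopologicalSpace E] [T2Space E]
    (φ : A →L[𝕂] E) {x : A} (hx : ∀ n : ℕ, φ (x ^ (n + 1)) = 0) :
    φ (exp x) = φ 1 := by
  rw [exp_eq_tsum 𝕂, φ.map_tsum (expSeries_summable' x), tsum_eq_single 0]
  · simp
  · intro n hn
    obtain ⟨m, rfl⟩ := Nat.exists_eq_succ_of_ne_zero hn
    rw [map_smul, hx, smul_zero]

section Supertrace

variable {𝕜 V : Type*} [RCLike 𝕜] [NormedAddCommGroup V] [NormedSpace 𝕜 V] [FiniteDimensional 𝕜 V]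

noncomputable def supertrace (ε : V →L[𝕜] V) : (V →L[𝕜] V) →L[𝕜] 𝕜 :=
  LinearMap.toContinuousLinearMap
    ((LinearMap.trace 𝕜 V).comp ((ContinuousLinearMap.coeLM 𝕜).comp (LinearMap.mulLeft 𝕜 ε)))

theorem supertrace_apply (ε T : V →L[𝕜] V) :
    supertrace ε T = LinearMap.trace 𝕜 V (ε * T).toLinearMap := rfl

theorem supertrace_pow_succ_eq_zero {ε Q : V →L[𝕜] V} (hodd : Q * ε = -(ε * Q)) (n : ℕ) :
    supertrace ε (Q ^ (n + 1)) = 0 := by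
  let π := ContinuousLinearMap.toLinearMapRingHom (R₁ := 𝕜) (M₁ := V)
  have hodd' : π Q * π ε = -(π ε * π Q) := by simpa only [map_mul, map_neg] using congrArg π hodd
  change LinearMap.trace 𝕜 V (π (ε * Q ^ (n + 1))) = 0
  rw [map_mul, map_pow]
  exact LinearMap.trace_mul_pow_succ_eq_zero_of_mul_eq_neg hodd' n

theorem supertrace_exp_smul_sq {ε Q : V →L[𝕜] V} (hodd : Q * ε = -(ε * Q)) (c : 𝕜) :
    supertrace ε (exp (c • Q ^ 2)) = supertrace ε 1 := by
  have := FiniteDimensional.complete 𝕜 V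
  refine (supertrace ε).map_exp_eq_map_one_of_map_pow_succ_eq_zero fun n ↦ ?_
  rw [smul_pow, ← pow_mul, map_smul, show 2 * (n + 1) = (2 * n + 1) + 1 by ring,
    supertrace_pow_succ_eq_zero hodd, smul_zero]

end Supertrace

theorem rg_invariance_partition_function_general
    {V : Type*} [NormedAddCommGroup V] [InnerProductSpace ℂ V] [FiniteDimensional ℂ V]
    (ε Q : V →L[ℂ] V)
    (hodd : Q * ε = -(ε * Q))
    (t : ℝ) (μ : ℝ) :
    LinearMap.trace ℂ V ((ε * NormedSpace.exp ((-((μ ^ 2 * t : ℝ) : ℂ)) • Q ^ 2)).toLinearMap)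
      = LinearMap.trace ℂ V ((ε * NormedSpace.exp ((-(t : ℂ)) • Q ^ 2)).toLinearMap) := by
  simp only [← supertrace_apply, supertrace_exp_smul_sq hodd]

/-- **Renormalization-group invariance of the supersymmetric partition function.**
Let `V` be a finite-dimensional complex inner product space with `ℤ/2`-grading given by a
self-adjoint linear involution `ε`, and let `Q` be an odd self-adjoint operator. Then for every
real `t` and every `μ > 0`, `sTr (exp (−μ²t·Q²)) = sTr (exp (−t·Q²))`. -/
theorem rg_invariance_partition_function
    {V : Type*} [NormedAddCommGroup V] [InnerProductSpace ℂ V] [FiniteDimensional ℂ V]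
    (ε Q : V →L[ℂ] V)
    (hε_sa : IsSelfAdjoint ε) (hε2 : ε * ε = 1)
    (hQ_sa : IsSelfAdjoint Q) (hodd : Q * ε = -(ε * Q))
    (t : ℝ) (μ : ℝ) (hμ : 0 < μ) :
    LinearMap.trace ℂ V ((ε * NormedSpace.exp ((-((μ ^ 2 * t : ℝ) : ℂ)) • Q ^ 2)).toLinearMap)
      = LinearMap.trace ℂ V ((ε * NormedSpace.exp ((-(t : ℂ)) • Q ^ 2)).toLinearMap) :=
  rg_invariance_partition_function_general ε Q hodd t μ
end
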